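/- For the discrete Clifford torus s(m,n) = (e^{iφ(m)} cos α, e^{iψ(n)} sin α) and z := n − cot(2α)·s = (1/sin 2α)(−e^{iφ(m)} cos α, e^{iψ(n)} sin α), on every elementary quadrilateral the diagonals of z are parallel to the opposite diagonals of s: δz_{(m,n)(m+1,n+1)} ∥ δs_{(m+1,n)(m,n+1)} and δz_{(m+1,n)(m,n+1)} ∥ δs_{(m,n)(m+1,n+1)}. Consequently A(z, s) = 0, hence A(n, s) = cot(2α)·A(s, s), so s has constant mixed-area mean curvature H = −cot(2α) with respect to the Gauss map n. -/
import Mathlib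


open Complex

/-- The real (Euclidean) inner product on `ℂ² ≅ ℝ⁴`. -/
noncomputable def rip (z w : ℂ × ℂ) : ℝ :=
  (z.1 * (starRingEnd ℂ) w.1 + z.2 * (starRingEnd ℂ) w.2).re

/-- The Clifford torus net. -/
noncomputable def cliffS (α : ℝ) (φ ψ : ℤ → ℝ) (p : ℤ × ℤ) : ℂ × ℂ :=
  (Complex.exp (φ p.1 * I) * Real.cos α, Complex.exp (ψ p.2 * I) * Real.sin α)

/-- The Gauss map of the Clifford torus net. -/
noncomputable def cliffN (α : ℝ) (φ ψ : ℤ → ℝ) (p : ℤ × ℤ) : ℂ × ℂ :=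
  (-(Complex.exp (φ p.1 * I) * Real.sin α), Complex.exp (ψ p.2 * I) * Real.cos α)

/-- The wedge product on `ℂ² ≅ ℝ⁴` as a real vector space. -/
noncomputable def wedgeC (v w : ℂ × ℂ) : ExteriorAlgebra ℝ (ℂ × ℂ) :=
  ExteriorAlgebra.ι ℝ v * ExteriorAlgebra.ι ℝ w

/-- The mixed area of two nets on the elementary quadrilateral with lower-left
vertex `(m,n)`. -/
noncomputable def MAC (f g : ℤ × ℤ → ℂ × ℂ) (m n : ℤ) :
    ExteriorAlgebra ℝ (ℂ × ℂ) :=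
  (4 : ℝ)⁻¹ • (wedgeC (f (m + 1, n + 1) - f (m, n)) (g (m, n + 1) - g (m + 1, n)) +
    wedgeC (g (m + 1, n + 1) - g (m, n)) (f (m, n + 1) - f (m + 1, n)))

lemma wedgeC_smul_left (r : ℝ) (v w : ℂ × ℂ) : wedgeC (r • v) w = r • wedgeC v w := by
  simp [wedgeC, smul_mul_assoc]

lemma wedgeC_smul_right (r : ℝ) (v w : ℂ × ℂ) : wedgeC v (r • w) = r • wedgeC v w := by
  simp [wedgeC, mul_smul_comm]

lemma wedgeC_add_left (u v w : ℂ × ℂ) : wedgeC (u + v) w = wedgeC u w + wedgeC v w := by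
  simp [wedgeC, add_mul]

lemma wedgeC_add_right (u v w : ℂ × ℂ) : wedgeC u (v + w) = wedgeC u v + wedgeC u w := by
  simp [wedgeC, mul_add]

lemma wedgeC_self (v : ℂ × ℂ) : wedgeC v v = 0 := ExteriorAlgebra.ι_sq_zero v

/-- For the Clifford torus, the diagonals of `z = n - cot(2α) s` are parallel to
the opposite diagonals of `s`; hence `A(z,s) = 0`, `A(n,s) = cot(2α) A(s,s)`,
and `s` has constant mixed-area mean curvature `H = -cot(2α)`. -/
theorem stmt13 (α : ℝ) (hα : α ∈ Set.Ioo 0 (Real.pi / 2)) (φ ψ : ℤ → ℝ)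
    (s n z : ℤ × ℤ → ℂ × ℂ)
    (hs : s = cliffS α φ ψ) (hn : n = cliffN α φ ψ)
    (hz : z = fun p => n p - Real.cot (2 * α) • s p) :
    (∀ m n' : ℤ, wedgeC (z (m + 1, n' + 1) - z (m, n')) (s (m, n' + 1) - s (m + 1, n')) = 0) ∧
    (∀ m n' : ℤ, wedgeC (z (m, n' + 1) - z (m + 1, n')) (s (m + 1, n' + 1) - s (m, n')) = 0) ∧
    (∀ m n' : ℤ, MAC z s m n' = 0) ∧
    (∀ m n' : ℤ, MAC n s m n' = Real.cot (2 * α) • MAC s s m n') ∧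
    (∀ m n' : ℤ, MAC n s m n' = -(-Real.cot (2 * α)) • MAC s s m n') := by
  obtain ⟨h0, h1⟩ := hα
  have hσ : Real.sin (2*α) ≠ 0 := (Real.sin_pos_of_pos_of_lt_pi (by linarith) (by linarith)).ne'
  have e1 : Real.sin α + Real.cot (2*α) * Real.cos α = (Real.sin (2*α))⁻¹ * Real.cos α := by
    rw [Real.cot_eq_cos_div_sin]; field_simp
    have := Real.cos_sub (2*α) α
    rw [show 2*α - α = α by ring] at this; linarith
  have e2 : Real.cos α - Real.cot (2*α) * Real.sin α = (Real.sin (2*α))⁻¹ * Real.sin α := by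
    rw [Real.cot_eq_cos_div_sin]; field_simp
    have := Real.sin_sub (2*α) α
    rw [show 2*α - α = α by ring] at this; linarith
  have e1C : (Real.sin α : ℂ) + Real.cot (2*α) * Real.cos α = (Real.sin (2*α))⁻¹ * Real.cos α := by
    exact_mod_cast congrArg Complex.ofReal e1
  have e2C : (Real.cos α : ℂ) - Real.cot (2*α) * Real.sin α = (Real.sin (2*α))⁻¹ * Real.sin α := by
    exact_mod_cast congrArg Complex.ofReal e2
  -- the two parallelism identities
  have hp1 : ∀ m n' : ℤ, z (m + 1, n' + 1) - z (m, n')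
      = (Real.sin (2*α))⁻¹ • (s (m, n' + 1) - s (m + 1, n')) := by
    intro m n'
    subst hs hn hz
    simp only [cliffS, cliffN, Prod.mk.injEq, Prod.ext_iff, Prod.smul_fst, Prod.smul_snd,
      Prod.fst_sub, Prod.snd_sub, Prod.fst, Prod.snd, Complex.real_smul, smul_eq_mul]
    push_cast at e1C e2C ⊢
    constructor
    · linear_combination (Complex.exp (φ m * I) - Complex.exp (φ (m+1) * I)) * e1C
    · linear_combination (Complex.exp (ψ (n'+1) * I) - Complex.exp (ψ n' * I)) * e2C
  have hp2 : ∀ m n' : ℤ, z (m, n' + 1) - z (m + 1, n')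
      = (Real.sin (2*α))⁻¹ • (s (m + 1, n' + 1) - s (m, n')) := by
    intro m n'
    subst hs hn hz
    simp only [cliffS, cliffN, Prod.mk.injEq, Prod.ext_iff, Prod.smul_fst, Prod.smul_snd,
      Prod.fst_sub, Prod.snd_sub, Prod.fst, Prod.snd, Complex.real_smul, smul_eq_mul]
    push_cast at e1C e2C ⊢
    constructor
    · linear_combination (Complex.exp (φ (m+1) * I) - Complex.exp (φ m * I)) * e1C
    · linear_combination (Complex.exp (ψ (n'+1) * I) - Complex.exp (ψ n' * I)) * e2C
  have w1 : ∀ m n' : ℤ,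
      wedgeC (z (m + 1, n' + 1) - z (m, n')) (s (m, n' + 1) - s (m + 1, n')) = 0 := by
    intro m n'
    rw [hp1, wedgeC_smul_left, wedgeC_self, smul_zero]
  have w2 : ∀ m n' : ℤ,
      wedgeC (z (m, n' + 1) - z (m + 1, n')) (s (m + 1, n' + 1) - s (m, n')) = 0 := by
    intro m n'
    rw [hp2, wedgeC_smul_left, wedgeC_self, smul_zero]
  have hMzs : ∀ m n' : ℤ, MAC z s m n' = 0 := by
    intro m n'
    rw [MAC, w1]
    rw [show wedgeC (s (m + 1, n' + 1) - s (m, n')) (z (m, n' + 1) - z (m + 1, n')) = 0 by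
      rw [hp2, wedgeC_smul_right, wedgeC_self, smul_zero]]
    simp
  have hns : ∀ a b : ℤ × ℤ, n a - n b = (z a - z b) + Real.cot (2*α) • (s a - s b) := by
    intro a b
    subst hz
    simp only [smul_sub]
    abel
  have hMns : ∀ m n' : ℤ, MAC n s m n' = Real.cot (2 * α) • MAC s s m n' := by
    intro m n'
    have expand : MAC n s m n'
        = MAC z s m n' + Real.cot (2*α) • MAC s s m n' := by
      simp only [MAC, hns, wedgeC_add_left, wedgeC_add_right, wedgeC_smul_left,
        wedgeC_smul_right, smul_add]
      module
    rw [expand, hMzs, zero_add]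
  exact ⟨w1, w2, hMzs, hMns, fun m n' => by rw [hMns, neg_neg]⟩
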